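/- Let η_t = η_1 t^{-θ} for θ ∈ [0,1) and t ≥ 1. Then for all t ≥ 2, ∑_{k=1}^{t-1} (1/(k(k+1))) ∑_{i=t-k}^{t-1} η_i² ≤ 2 η_1² t^{-min(2θ,1)} (log t + 1). -/

import Mathlib

open Finset

/-! Each inner sum has `k` terms, all at most `η₁² (t - k)^{-m}` with `m = min (2θ) 1`, so the
`k`-th summand is at most `η₁² (t - k)^{-m} / k`. Since `m ≤ 1`, `(t - k)^{1-m} ≤ t^{1-m}`,
which turns this into `η₁² t^{-m} (1/(t - k) + 1/k)`, and both resulting sums over `k` are the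
harmonic number `H_{t-1} ≤ log t + 1`. -/

theorem sum_Icc_one_inv_le_log_add_one (t : ℕ) :
    ∑ k ∈ Icc 1 (t - 1), (k : ℝ)⁻¹ ≤ Real.log t + 1 := by
  have harmonic_le : (harmonic (t - 1) : ℝ) ≤ 1 + Real.log (t - 1 : ℕ) :=
    harmonic_le_one_add_log _
  simp only [harmonic_eq_sum_Icc, Rat.cast_sum, Rat.cast_inv, Rat.cast_natCast] at harmonic_le
  have log_le : Real.log (t - 1 : ℕ) ≤ Real.log t := by
    rcases Nat.eq_zero_or_pos (t - 1) with h | h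
    · rw [h, Nat.cast_zero, Real.log_zero]
      exact Real.log_natCast_nonneg t
    · exact Real.log_le_log (by exact_mod_cast h) (by exact_mod_cast Nat.sub_le t 1)
  linarith

theorem sum_Icc_one_sub_reflect {M : Type*} [AddCommMonoid M] (f : ℕ → M) (t : ℕ) :
    ∑ k ∈ Icc 1 (t - 1), f (t - k) = ∑ k ∈ Icc 1 (t - 1), f k := by
  refine sum_nbij' (fun k ↦ t - k) (fun k ↦ t - k) ?_ ?_ ?_ ?_ fun _ _ ↦ rfl <;>
    intro k hk <;> simp only [mem_Icc] at hk ⊢ <;> omega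

theorem rpow_neg_mul_inv_le {a b m : ℝ} (ha : 0 < a) (hb : 0 < b) (hm : m ≤ 1) :
    a ^ (-m) * b⁻¹ ≤ (a + b) ^ (-m) * (a⁻¹ + b⁻¹) := by
  have hab : 0 < a + b := add_pos ha hb
  have neg_m : -m = (1 - m) - 1 := by ring
  calc a ^ (-m) * b⁻¹ = a ^ (1 - m) / (a * b) := by
        rw [neg_m, Real.rpow_sub_one ha.ne']; field_simp
    _ ≤ (a + b) ^ (1 - m) / (a * b) := by
        gcongr
        linarith
    _ = (a + b) ^ (-m) * (a⁻¹ + b⁻¹) := by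
        rw [neg_m, Real.rpow_sub_one hab.ne']; field_simp; ring

theorem sq_mul_rpow_neg_le {η θ m a i : ℝ} (ha : 1 ≤ a) (hai : a ≤ i) (hm0 : 0 ≤ m)
    (hm : m ≤ 2 * θ) : (η * i ^ (-θ)) ^ 2 ≤ η ^ 2 * a ^ (-m) := by
  have hi : 1 ≤ i := ha.trans hai
  rw [mul_pow, ← Real.rpow_mul_natCast (by linarith)]
  gcongr
  calc i ^ (-θ * (2 : ℕ)) ≤ i ^ (-m) :=
        Real.rpow_le_rpow_of_exponent_le hi (by push_cast; linarith)
    _ ≤ a ^ (-m) := Real.rpow_le_rpow_of_nonpos (by linarith) hai (by linarith)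

theorem weighted_tail_sum_le {θ η₁ m : ℝ} (hm0 : 0 ≤ m) (hm1 : m ≤ 1) (hm : m ≤ 2 * θ)
    {t k : ℕ} (hk : k ∈ Icc 1 (t - 1)) :
    (1 / ((k : ℝ) * ((k : ℝ) + 1))) *
        ∑ i ∈ Icc (t - k) (t - 1), (η₁ * (i : ℝ) ^ (-θ)) ^ 2 ≤
      η₁ ^ 2 * (t : ℝ) ^ (-m) * (((t - k : ℕ) : ℝ)⁻¹ + (k : ℝ)⁻¹) := by
  obtain ⟨hk1, hkt⟩ := mem_Icc.1 hk
  set a : ℝ := ((t - k : ℕ) : ℝ)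
  have ha : 1 ≤ a := Nat.one_le_cast.2 (by omega)
  have hk0 : (0 : ℝ) < k := by exact_mod_cast hk1
  have hak : a + k = t := by simp only [a]; norm_cast; omega
  have inner_le : ∑ i ∈ Icc (t - k) (t - 1), (η₁ * (i : ℝ) ^ (-θ)) ^ 2 ≤
      k * (η₁ ^ 2 * a ^ (-m)) := by
    have card_eq : #(Icc (t - k) (t - 1)) = k := by rw [Nat.card_Icc]; omega
    simpa [card_eq] using sum_le_card_nsmul (Icc (t - k) (t - 1))
      (fun i : ℕ ↦ (η₁ * (i : ℝ) ^ (-θ)) ^ 2) _ fun i hi ↦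
      sq_mul_rpow_neg_le (η := η₁) ha (Nat.cast_le.2 (mem_Icc.1 hi).1) hm0 hm
  calc _ ≤ (1 / ((k : ℝ) * ((k : ℝ) + 1))) * (k * (η₁ ^ 2 * a ^ (-m))) := by gcongr
    _ = η₁ ^ 2 * (a ^ (-m) * ((k : ℝ) + 1)⁻¹) := by field_simp
    _ ≤ η₁ ^ 2 * (a ^ (-m) * (k : ℝ)⁻¹) := by
        gcongr; exact le_add_of_nonneg_right zero_le_one
    _ ≤ η₁ ^ 2 * ((a + k) ^ (-m) * (a⁻¹ + (k : ℝ)⁻¹)) :=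
        mul_le_mul_of_nonneg_left (rpow_neg_mul_inv_le (by linarith) hk0 hm1) (sq_nonneg _)
    _ = η₁ ^ 2 * (t : ℝ) ^ (-m) * (a⁻¹ + (k : ℝ)⁻¹) := by rw [hak]; ring

theorem double_sum_stepsize_bound_general (θ η₁ : ℝ) (hθ0 : 0 ≤ θ) (t : ℕ) :
    ∑ k ∈ Finset.Icc 1 (t - 1), (1 / ((k : ℝ) * ((k : ℝ) + 1))) *
        ∑ i ∈ Finset.Icc (t - k) (t - 1), (η₁ * (i : ℝ) ^ (-θ)) ^ 2 ≤
      2 * η₁ ^ 2 * (t : ℝ) ^ (-(min (2 * θ) 1)) * (Real.log t + 1) := by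
  set m := min (2 * θ) 1
  have hm0 : 0 ≤ m := le_min (by linarith) zero_le_one
  calc _ ≤ ∑ k ∈ Icc 1 (t - 1),
          η₁ ^ 2 * (t : ℝ) ^ (-m) * (((t - k : ℕ) : ℝ)⁻¹ + (k : ℝ)⁻¹) :=
        sum_le_sum fun k hk ↦ weighted_tail_sum_le hm0 (min_le_right _ _) (min_le_left _ _) hk
    _ = 2 * η₁ ^ 2 * (t : ℝ) ^ (-m) * ∑ k ∈ Icc 1 (t - 1), (k : ℝ)⁻¹ := by
        rw [← mul_sum, sum_add_distrib, sum_Icc_one_sub_reflect (fun k ↦ (k : ℝ)⁻¹)]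
        ring
    _ ≤ 2 * η₁ ^ 2 * (t : ℝ) ^ (-m) * (Real.log t + 1) := by
        gcongr
        exact sum_Icc_one_inv_le_log_add_one t

/-- For step-sizes η_i = η₁ i^{-θ} with θ ∈ [0,1), for all t ≥ 2,
    ∑_{k=1}^{t-1} (1/(k(k+1))) ∑_{i=t-k}^{t-1} η_i² ≤ 2 η₁² t^{-min(2θ,1)} (log t + 1). -/
theorem double_sum_stepsize_bound (θ η₁ : ℝ) (hθ0 : 0 ≤ θ) (hθ1 : θ < 1)
    (hη₁ : 0 < η₁) (t : ℕ) (ht : 2 ≤ t) :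
    ∑ k ∈ Finset.Icc 1 (t - 1), (1 / ((k : ℝ) * ((k : ℝ) + 1))) *
        ∑ i ∈ Finset.Icc (t - k) (t - 1), (η₁ * (i : ℝ) ^ (-θ)) ^ 2 ≤
      2 * η₁ ^ 2 * (t : ℝ) ^ (-(min (2 * θ) 1)) * (Real.log t + 1) :=
  double_sum_stepsize_bound_general θ η₁ hθ0 t
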